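/- There exist a complete metric space Z and a continuous map F : Z → Z such that the cascade (Z, F) is thickly sensitive but not multi-sensitive; that is: (a) there exists ε > 0 such that for every nonempty open subset U of Z, the set {n ∈ ℕ : diam(F^[n] '' U) > ε} is thick in ℕ (for every N ∈ ℕ there exists m ∈ ℕ with {m, m+1, …, m+N} contained in this set); and (b) for every ε > 0 there exist nonempty open subsets U₁, U₂ of Z with {n ∈ ℕ : diam(F^[n] '' U₁) > ε} ∩ {n ∈ ℕ : diam(F^[n] '' U₂) > ε} = ∅. -/

import Mathlib

open Set

/-- A cascade on a complete metric space that is thickly sensitive but not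
multi-sensitive. A set `B ⊆ ℕ` is thick iff for every `N` there is `m` with
`{m, m+1, …, m+N} ⊆ B`; here thick sensitivity is spelled out accordingly. -/
structure ThicklySensitiveNotMultiCascade where
  /-- the phase space -/
  Z : Type
  [instMet : MetricSpace Z]
  [instComplete : CompleteSpace Z]
  /-- the map generating the cascade -/
  F : Z → Z
  contF : Continuous F
  /-- (a) thickly sensitive: some `ε > 0` makes `{n : ℕ | diam (F^[n] '' U) > ε}` thick
  for every nonempty open `U` -/
  thicklySensitive : ∃ ε : ℝ, 0 < ε ∧ ∀ U : Set Z, IsOpen U → U.Nonempty →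
    ∀ N : ℕ, ∃ m : ℕ, ∀ k ≤ N, (m + k) ∈ {n : ℕ | ε < Metric.diam (F^[n] '' U)}
  /-- (b) not multi-sensitive: for every `ε > 0` there are nonempty open `U₁, U₂` with
  `D(U₁, ε) ∩ D(U₂, ε) = ∅` -/
  notMultiSensitive : ∀ ε : ℝ, 0 < ε → ∃ U₁ U₂ : Set Z,
    IsOpen U₁ ∧ U₁.Nonempty ∧ IsOpen U₂ ∧ U₂.Nonempty ∧
    {n : ℕ | ε < Metric.diam (F^[n] '' U₁)} ∩ {n : ℕ | ε < Metric.diam (F^[n] '' U₂)} = ∅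

/-!
The phase space is a disjoint union of copies of `[0, 1]`, one for each component `c` and time
`t`. The cascade moves `x` in copy `(c, t)` to copy `(c, t + 1)`, applying the tent map if `t`
lies in a block `[a, 3a)`, `a = (c + 1) 16 ^ i`, and `x ↦ x / 2` otherwise. Both maps act on
dyadic scales: the tent map sends a dyadic interval of level `k + 1` onto one of level `k` and
`[0, 1]` onto itself, halving sends level `k` to level `k + 1`, and the same bookkeeping bounds
the image of `[0, 2⁻ᵏ]` from above. Along an orbit everything is thus governed by an integer
`level`, which drops by one (down to `0`) inside a block and grows by one outside.

Every open set contains a dyadic interval of some level `k` in some fiber; a block that is long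
compared with `k` and with the waiting time brings the level down to `0`, so the image is all of
`[0, 1]` for the rest of the block: this gives thick sensitivity. Starting from `[0, 2⁻ᵐ)` at
time `0`, the level stays `≥ m`, so the diameter stays `≤ 2⁻ᵐ`, outside the windows
`[a, 3a + m)`; the windows of the components `m` and `4m + 3` are disjoint, as their block starts
interleave: `a < 3a + m < 4a < 12a + m < 16a`.
-/

open Metric Bornology unitInterval

noncomputable section

def tent (x : ℝ) : ℝ := 1 - |2 * x - 1|

open Classical in
def step (p : Prop) : ℝ → ℝ := if p then tent else (· / 2)

-- Truncated subtraction is intended: the tent map sends `[0, 1]` (level `0`) onto itself.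
open Classical in
def levelStep (p : Prop) (k : ℕ) : ℕ := if p then k - 1 else k + 1

lemma continuous_tent : Continuous tent := by
  unfold tent; fun_prop

lemma continuous_step (p : Prop) : Continuous (step p) := by
  unfold step; split
  · exact continuous_tent
  · fun_prop

lemma step_mapsTo_Icc (p : Prop) (k : ℕ) :
    MapsTo (step p) (Icc 0 ((1 / 2) ^ k)) (Icc 0 ((1 / 2) ^ levelStep p k)) := by
  intro x ⟨hx0, hxk⟩
  have hk : ((1 : ℝ) / 2) ^ k ≤ 1 := pow_le_one₀ (by norm_num) (by norm_num)
  by_cases hp : p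
  · simp only [step, levelStep, hp, if_true, tent, mem_Icc]
    have habs : |2 * x - 1| ≤ 1 := abs_le.2 ⟨by linarith, by linarith⟩
    refine ⟨by linarith, ?_⟩
    rcases k with _ | k
    · simp
    · have : 1 - |2 * x - 1| ≤ 2 * x := by linarith [neg_abs_le (2 * x - 1)]
      rw [pow_succ] at hxk
      simp only [Nat.add_sub_cancel]
      linarith
  · simp only [step, levelStep, hp, if_false, mem_Icc, pow_succ]
    constructor <;> linarith

lemma step_mapsTo_unitInterval (p : Prop) : MapsTo (step p) I I := by
  simpa using (step_mapsTo_Icc p 0).mono_right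
    (Icc_subset_Icc_right (pow_le_one₀ (by norm_num) (by norm_num)))

def dyadicInterval (k j : ℕ) : Set ℝ := Icc (j / 2 ^ k) ((j + 1) / 2 ^ k)

lemma mem_dyadicInterval {k j : ℕ} {x : ℝ} :
    x ∈ dyadicInterval k j ↔ (j : ℝ) ≤ x * 2 ^ k ∧ x * 2 ^ k ≤ j + 1 := by
  simp only [dyadicInterval, mem_Icc, div_le_iff₀ (by positivity : (0 : ℝ) < 2 ^ k),
    le_div_iff₀ (by positivity : (0 : ℝ) < 2 ^ k)]

def ContainsDyadic (k : ℕ) (s : Set ℝ) : Prop := ∃ j < 2 ^ k, dyadicInterval k j ⊆ s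

lemma containsDyadic_zero_iff {s : Set ℝ} : ContainsDyadic 0 s ↔ Icc 0 1 ⊆ s := by
  simp [ContainsDyadic, dyadicInterval]

lemma ContainsDyadic.mono {k : ℕ} {s t : Set ℝ} (h : ContainsDyadic k s) (hst : s ⊆ t) :
    ContainsDyadic k t :=
  let ⟨j, hj, hs⟩ := h; ⟨j, hj, hs.trans hst⟩

lemma one_le_diam_of_containsDyadic_zero {s : Set ℝ} (h : ContainsDyadic 0 s)
    (hs : IsBounded s) : 1 ≤ diam s := by
  simpa [Real.diam_Icc] using diam_mono (containsDyadic_zero_iff.1 h) hs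

lemma exists_containsDyadic_ball {x r : ℝ} (hx : x ∈ Icc 0 1) (hr : 0 < r) :
    ∃ k, ContainsDyadic k (Icc 0 1 ∩ ball x r) := by
  obtain ⟨k, hk⟩ := exists_pow_lt_of_lt_one (half_pos hr) (by norm_num : (1 : ℝ) / 2 < 1)
  have heq : (1 / 2 : ℝ) ^ k * 2 ^ k = 1 := by rw [← mul_pow]; norm_num
  have hq : (1 : ℝ) ≤ 2 ^ k := one_le_pow₀ (by norm_num)
  -- the dyadic interval of level `k` starting at `⌊x (2^k - 1)⌋ / 2^k` lies within `2/2^k` of `x`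
  set j := ⌊x * (2 ^ k - 1)⌋₊
  have hj0 : (j : ℝ) ≤ x * (2 ^ k - 1) := Nat.floor_le (by nlinarith [hx.1])
  have hj1 : x * (2 ^ k - 1) < j + 1 := Nat.lt_floor_add_one _
  have hjq : (j : ℝ) + 1 ≤ 2 ^ k := by nlinarith [hx.2]
  have hj : (j : ℝ) < 2 ^ k := by linarith
  refine ⟨k, j, by exact_mod_cast hj, fun y hy => ?_⟩
  obtain ⟨hy₁, hy₂⟩ := mem_dyadicInterval.1 hy
  have hyx : (y - x) * 2 ^ k ≤ 1 := by nlinarith [hx.1]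
  have hxy : (x - y) * 2 ^ k < 2 := by nlinarith [hx.2]
  refine ⟨⟨by nlinarith, by nlinarith⟩, ?_⟩
  rw [mem_ball, Real.dist_eq, abs_sub_lt_iff]
  constructor <;> nlinarith

lemma dyadicInterval_succ_subset_half_image (k j : ℕ) :
    dyadicInterval (k + 1) j ⊆ (· / 2) '' dyadicInterval k j := by
  intro y hy
  rw [mem_dyadicInterval, pow_succ] at hy
  refine ⟨2 * y, mem_dyadicInterval.2 ⟨by linarith, by linarith⟩, by ring⟩

lemma dyadicInterval_subset_tent_image {k j : ℕ} (hj : j < 2 ^ (k + 1)) :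
    ∃ j' < 2 ^ k, dyadicInterval k j' ⊆ tent '' dyadicInterval (k + 1) j := by
  rcases lt_or_ge j (2 ^ k) with hlt | hge
  · refine ⟨j, hlt, fun y hy => ⟨y / 2, ?_, ?_⟩⟩
    · rw [mem_dyadicInterval] at hy ⊢
      rw [pow_succ]
      constructor <;> linarith
    · have hj1 : (j : ℝ) + 1 ≤ 2 ^ k := by exact_mod_cast hlt
      have hy1 : y ≤ 1 := by
        rw [mem_dyadicInterval] at hy
        nlinarith
      rw [tent, abs_of_nonpos (by linarith)]
      ring
  -- on the right half `tent x = 2 - 2x`, which reflects interval `j` to interval `2^(k+1) - 1 - j`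
  · obtain ⟨j', hj'⟩ : ∃ j', j + j' + 1 = 2 ^ (k + 1) := ⟨2 ^ (k + 1) - j - 1, by omega⟩
    have hsum : (j : ℝ) + j' + 1 = 2 * 2 ^ k := by rw [← pow_succ']; exact_mod_cast hj'
    refine ⟨j', by rw [pow_succ] at hj'; omega, fun y hy => ⟨1 - y / 2, ?_, ?_⟩⟩
    · rw [mem_dyadicInterval] at hy ⊢
      rw [pow_succ]
      constructor <;> nlinarith
    · have hj1 : (j' : ℝ) + 1 ≤ 2 ^ k := by
        have : (2 : ℝ) ^ k ≤ j := by exact_mod_cast hge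
        linarith
      have hy1 : y ≤ 1 := by
        rw [mem_dyadicInterval] at hy
        nlinarith
      rw [tent, abs_of_nonneg (by linarith)]
      ring

lemma Icc_subset_tent_image_Icc : Icc 0 1 ⊆ tent '' Icc 0 1 := fun y ⟨hy0, hy1⟩ =>
  ⟨y / 2, ⟨by linarith, by linarith⟩, by rw [tent, abs_of_nonpos (by linarith)]; ring⟩

lemma ContainsDyadic.step_image {k : ℕ} {s : Set ℝ} (h : ContainsDyadic k s) (p : Prop) :
    ContainsDyadic (levelStep p k) (step p '' s) := by
  obtain ⟨j, hj, hs⟩ := h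
  by_cases hp : p
  · simp only [step, levelStep, hp, if_true]
    rcases k with _ | k
    · exact containsDyadic_zero_iff.2 <|
        Icc_subset_tent_image_Icc.trans (image_mono (containsDyadic_zero_iff.1 ⟨j, hj, hs⟩))
    · obtain ⟨j', hj', hsub⟩ := dyadicInterval_subset_tent_image hj
      exact ⟨j', hj', hsub.trans (image_mono hs)⟩
  · simp only [step, levelStep, hp, if_false]
    exact ⟨j, hj.trans_le (Nat.pow_le_pow_right two_pos k.le_succ),
      (dyadicInterval_succ_subset_half_image k j).trans (image_mono hs)⟩

section Schedule

variable (τ : ℕ → Prop)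

def orbitMap : ℕ → ℝ → ℝ
  | 0 => id
  | n + 1 => step (τ n) ∘ orbitMap n

def level (k : ℕ) : ℕ → ℕ
  | 0 => k
  | n + 1 => levelStep (τ n) (level k n)

variable {τ}

lemma orbitMap_mapsTo_Icc (k n : ℕ) :
    MapsTo (orbitMap τ n) (Icc 0 ((1 / 2) ^ k)) (Icc 0 ((1 / 2) ^ level τ k n)) := by
  induction n with
  | zero => exact mapsTo_id _
  | succ n ih => exact (step_mapsTo_Icc _ _).comp ih

lemma orbitMap_mapsTo_unitInterval (n : ℕ) : MapsTo (orbitMap τ n) I I := by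
  induction n with
  | zero => exact mapsTo_id _
  | succ n ih => exact (step_mapsTo_unitInterval _).comp ih

lemma ContainsDyadic.orbitMap_image {k : ℕ} {s : Set ℝ} (h : ContainsDyadic k s) (n : ℕ) :
    ContainsDyadic (level τ k n) (orbitMap τ n '' s) := by
  induction n with
  | zero => simpa [orbitMap, level] using h
  | succ n ih => simpa [orbitMap, level, image_comp] using ih.step_image (τ n)

lemma level_le_add (k n : ℕ) : level τ k n ≤ k + n := by
  induction n with
  | zero => rfl
  | succ n ih =>
    simp only [level, levelStep]
    split <;> omega

lemma level_add_of_forall_not {k n j : ℕ} (h : ∀ i < j, ¬ τ (n + i)) :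
    level τ k (n + j) = level τ k n + j := by
  induction j with
  | zero => rfl
  | succ j ih =>
    rw [← add_assoc, level, levelStep, if_neg (h j j.lt_succ_self),
      ih fun i hi => h i (hi.trans j.lt_succ_self), add_assoc]

lemma level_sub_of_forall {k n j : ℕ} (h : ∀ i < j, τ (n + i)) :
    level τ k (n + j) = level τ k n - j := by
  induction j with
  | zero => rfl
  | succ j ih =>
    rw [← add_assoc, level, levelStep, if_pos (h j j.lt_succ_self),
      ih fun i hi => h i (hi.trans j.lt_succ_self), Nat.sub_sub]

lemma diam_orbitMap_image_le {k n : ℕ} {s : Set ℝ} (hs : s ⊆ Icc 0 ((1 / 2) ^ k)) :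
    diam (orbitMap τ n '' s) ≤ (1 / 2) ^ level τ k n := by
  simpa [Real.diam_Icc] using
    diam_mono ((orbitMap_mapsTo_Icc k n).mono_left hs).image_subset (isBounded_Icc _ _)

end Schedule

def blockStart (c i : ℕ) : ℕ := (c + 1) * 16 ^ i

def InBlock (c n : ℕ) : Prop := ∃ i, blockStart c i ≤ n ∧ n < 3 * blockStart c i

lemma exists_le_blockStart (c X : ℕ) : ∃ i, X ≤ blockStart c i :=
  ⟨X, (Nat.lt_pow_self (by norm_num)).le.trans (Nat.le_mul_of_pos_left _ c.succ_pos)⟩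

lemma succ_le_blockStart (c i : ℕ) : c + 1 ≤ blockStart c i :=
  Nat.le_mul_of_pos_right _ (by positivity)

lemma blockStart_mono (c : ℕ) {i j : ℕ} (h : i ≤ j) : blockStart c i ≤ blockStart c j :=
  Nat.mul_le_mul_left _ (Nat.pow_le_pow_right (by norm_num) h)

lemma blockStart_succ_le (c : ℕ) {i j : ℕ} (h : i < j) :
    16 * blockStart c i ≤ blockStart c j := by
  calc 16 * blockStart c i = blockStart c (i + 1) := by simp only [blockStart]; ring
    _ ≤ blockStart c j := blockStart_mono c h

lemma not_inBlock_of_gap {c m i n : ℕ} (hm : m ≤ c) (h₁ : 3 * blockStart c i ≤ n)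
    (h₂ : n < 3 * blockStart c i + m) : ¬ InBlock c n := by
  rintro ⟨i', h₁', h₂'⟩
  have := succ_le_blockStart c i
  rcases le_or_gt i' i with h | h
  · have := blockStart_mono c h
    omega
  · have := blockStart_succ_le c h
    omega

lemma exists_level_eq_zero (c t k N : ℕ) :
    ∃ m, ∀ l ≤ N, level (fun i => InBlock c (t + i)) k (m + l) = 0 := by
  obtain ⟨i, hi⟩ := exists_le_blockStart c (t + k + N)
  set a := blockStart c i
  have hlev := level_le_add (τ := fun i => InBlock c (t + i)) k (a - t)
  refine ⟨a - t + (k + (a - t)), fun l hl => ?_⟩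
  have hblock : ∀ i' < k + (a - t) + l, InBlock c (t + (a - t + i')) :=
    fun i' hi' => ⟨i, by omega, by omega⟩
  rw [add_assoc, level_sub_of_forall hblock]
  omega

def InWindow (c m n : ℕ) : Prop := ∃ i, blockStart c i ≤ n ∧ n < 3 * blockStart c i + m

lemma inWindow_of_level_lt {c m n : ℕ} (hm : m ≤ c) (h : level (InBlock c) m n < m) :
    InWindow c m n := by
  induction n with
  | zero => exact absurd h (lt_irrefl _)
  | succ n ih =>
    by_cases hn : InBlock c n
    · obtain ⟨i, h₁, h₂⟩ := hn
      exact ⟨i, by omega, by omega⟩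
    · have hstep : level (InBlock c) m (n + 1) = level (InBlock c) m n + 1 :=
        level_add_of_forall_not fun _ hi => by rwa [Nat.lt_one_iff.1 hi]
      obtain ⟨i, h₁, h₂⟩ := ih (by omega)
      refine ⟨i, by omega, lt_of_le_of_ne (by omega) fun heq => ?_⟩
      -- `n + 1` ends the window: the `m` steps after the block were halvings
      have hgap : level (InBlock c) m (3 * blockStart c i + m) = _ + m :=
        level_add_of_forall_not fun _ _ => not_inBlock_of_gap (i := i) hm (by omega) (by omega)
      rw [heq, hgap] at h
      omega

lemma not_inWindow_of_inWindow {m n : ℕ} (h : InWindow m m n) : ¬ InWindow (4 * m + 3) m n := by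
  rintro ⟨j, h₃, h₄⟩
  obtain ⟨i, h₁, h₂⟩ := h
  have h4 : blockStart (4 * m + 3) j = 4 * blockStart m j := by simp only [blockStart]; ring
  have := succ_le_blockStart m j
  rcases le_or_gt i j with h | h
  · have := blockStart_mono m h
    omega
  · have := blockStart_succ_le m h
    omega

-- Distinct copies are at distance between `1` and `3`. Boundedness matters: the diameter of an
-- unbounded set is `0`.
attribute [local instance] Metric.Sigma.metricSpace

abbrev Phase : Type := Σ _ : ℕ × ℕ, I

def cascade : Phase → Phase :=
  Sigma.map (fun p : ℕ × ℕ => (p.1, p.2 + 1))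
    fun p => (step_mapsTo_unitInterval (InBlock p.1 p.2)).restrict

lemma continuous_cascade : Continuous cascade :=
  Continuous.sigma_map fun _ => (continuous_step _).restrict _

lemma cascade_iterate_mk (c t n : ℕ) (x : I) :
    cascade^[n] ⟨(c, t), x⟩ = ⟨(c, t + n),
      (orbitMap_mapsTo_unitInterval (τ := fun i => InBlock c (t + i)) n).restrict _ _ _ x⟩ := by
  induction n with
  | zero => rfl
  | succ n ih => rw [Function.iterate_succ_apply', ih]; rfl

lemma diam_cascade_iterate_image_mk (c t n : ℕ) (s : Set I) :
    diam (cascade^[n] '' (Sigma.mk (c, t) '' s)) =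
      diam (orbitMap (fun i => InBlock c (t + i)) n '' ((↑) '' s)) := by
  rw [image_image, funext (cascade_iterate_mk c t n), ← image_image (Sigma.mk _),
    (Metric.Sigma.isometry_mk _).diam_image, ← isometry_subtype_coe.diam_image, image_image,
    image_image]
  rfl

lemma isBounded_phase (s : Set Phase) : IsBounded s := by
  have hI : ∀ x y : I, dist x y ≤ 1 := fun x y => by
    rw [Subtype.dist_eq, Real.dist_eq, abs_sub_le_iff]
    constructor <;> linarith [x.2.1, x.2.2, y.2.1, y.2.2]
  refine isBounded_iff.2 ⟨3, fun ⟨i, x⟩ _ ⟨j, y⟩ _ => ?_⟩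
  rcases eq_or_ne i j with rfl | hij
  · rw [Metric.Sigma.dist_same]
    linarith [hI x y]
  · rw [Metric.Sigma.dist_ne hij]
    linarith [hI x (Nonempty.some ⟨x⟩), hI (Nonempty.some ⟨y⟩) y]

lemma IsOpen.exists_mk_image_ball_subset {U : Set Phase} (hU : IsOpen U) {p : ℕ × ℕ} {x : I}
    (hx : ⟨p, x⟩ ∈ U) : ∃ r > 0, Sigma.mk p '' ball x r ⊆ U := by
  obtain ⟨r, hr, hball⟩ := Metric.isOpen_iff.1 (isOpen_sigma_iff.1 hU p) x hx
  exact ⟨r, hr, image_subset_iff.2 hball⟩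

theorem cascade_thicklySensitive (U : Set Phase) (hU : IsOpen U) (hne : U.Nonempty) (N : ℕ) :
    ∃ m, ∀ l ≤ N, (1 / 2 : ℝ) < diam (cascade^[m + l] '' U) := by
  obtain ⟨⟨⟨c, t⟩, x⟩, hx⟩ := hne
  obtain ⟨r, hr, hball⟩ := hU.exists_mk_image_ball_subset hx
  obtain ⟨k, hk⟩ := exists_containsDyadic_ball x.2 hr
  have hk' : ContainsDyadic k ((↑) '' ball x r) := hk.mono fun y ⟨hy, hyx⟩ => ⟨⟨y, hy⟩, hyx, rfl⟩
  obtain ⟨m, hm⟩ := exists_level_eq_zero c t k N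
  refine ⟨m, fun l hl => ?_⟩
  have h0 := hm l hl ▸ hk'.orbitMap_image (τ := fun i => InBlock c (t + i)) (m + l)
  have hbdd : IsBounded (orbitMap (fun i => InBlock c (t + i)) (m + l) '' ((↑) '' ball x r)) :=
    (isBounded_Icc 0 1).subset
      ((orbitMap_mapsTo_unitInterval _).mono_left (Subtype.coe_image_subset _ _)).image_subset
  calc (1 / 2 : ℝ) < 1 := by norm_num
    _ ≤ _ := one_le_diam_of_containsDyadic_zero h0 hbdd
    _ = diam (cascade^[m + l] '' (Sigma.mk (c, t) '' ball x r)) :=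
      (diam_cascade_iterate_image_mk c t _ _).symm
    _ ≤ diam (cascade^[m + l] '' U) := diam_mono (image_mono hball) (isBounded_phase _)

lemma inWindow_of_lt_diam {ε : ℝ} {c m n : ℕ} (hm : m ≤ c) (hε : (1 / 2) ^ m < ε)
    (h : ε < diam (cascade^[n] '' (Sigma.mk (c, 0) '' {x : I | (x : ℝ) < (1 / 2) ^ m}))) :
    InWindow c m n := by
  refine inWindow_of_level_lt hm ((pow_lt_pow_iff_right_of_lt_one₀ (by norm_num)
    (by norm_num)).1 (hε.trans (h.trans_le ?_)))
  rw [diam_cascade_iterate_image_mk]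
  simp only [zero_add]
  exact diam_orbitMap_image_le fun _ ⟨x, hx, hxy⟩ => hxy ▸ ⟨x.2.1, hx.le⟩

theorem cascade_not_multiSensitive (ε : ℝ) (hε : 0 < ε) : ∃ U₁ U₂ : Set Phase,
    IsOpen U₁ ∧ U₁.Nonempty ∧ IsOpen U₂ ∧ U₂.Nonempty ∧
    {n : ℕ | ε < diam (cascade^[n] '' U₁)} ∩ {n : ℕ | ε < diam (cascade^[n] '' U₂)} = ∅ := by
  obtain ⟨m, hm⟩ := exists_pow_lt_of_lt_one hε (by norm_num : (1 / 2 : ℝ) < 1)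
  set W : Set I := {x | (x : ℝ) < (1 / 2) ^ m}
  have hW : IsOpen W := isOpen_lt continuous_subtype_val continuous_const
  have hW₀ : W.Nonempty := ⟨0, by simp [W]⟩
  refine ⟨Sigma.mk (m, 0) '' W, Sigma.mk (4 * m + 3, 0) '' W, isOpenMap_sigmaMk _ hW,
    hW₀.image _, isOpenMap_sigmaMk _ hW, hW₀.image _, eq_empty_of_forall_notMem ?_⟩
  rintro n ⟨h₁, h₂⟩
  exact not_inWindow_of_inWindow (inWindow_of_lt_diam le_rfl hm h₁)
    (inWindow_of_lt_diam (by omega) hm h₂)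

end

/-- There exists a complete metric space `Z` and a continuous `F : Z → Z` such that the
cascade `(Z, F)` is thickly sensitive but not multi-sensitive. -/
theorem stmt16 : Nonempty ThicklySensitiveNotMultiCascade :=
  ⟨{ Z := Phase
     instMet := Metric.Sigma.metricSpace
     instComplete := Metric.Sigma.completeSpace
     F := cascade
     contF := continuous_cascade
     thicklySensitive := ⟨1 / 2, by norm_num, cascade_thicklySensitive⟩
     notMultiSensitive := cascade_not_multiSensitive }⟩
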